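/- Let ε > 0, L > 0, θ ∈ [0, π/2), and let v ∈ W^{2,1}(0,L) satisfy v_x(0) = 0 and |v_x(L)| = tan θ. Then ∫₀^L [ ε κ_v² √(1+v_x²) + (1/ε)(√(1+v_x²) − 1) ] dx ≥ 4(√2 − √(1+cos θ)), where κ_v := v_xx / (1+v_x²)^{3/2} is the curvature of the graph of v. -/

import Mathlib

/-!
Modica–Mortola: with `s = √(1 + v_x²)` the energy density is `ε a² + b² / ε` for
`a = v_xx / s^(5/2)` and `b = √(s - 1)`, hence it dominates `2ab · sign v_x`, which is the
derivative of `potential ∘ v_x` with `potential z = 4 (√2 - √(1 + 1/√(1 + z²)))`. Integrating, the energy is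
at least `potential (v_x L) - potential (v_x 0) = potential (tan θ) - potential 0`, and
`1/√(1 + tan² θ) = cos θ`.
-/

open Real Set MeasureTheory intervalIntegral

namespace ModicaMortola

noncomputable def density (ε p q : ℝ) : ℝ :=
  ε * (q / (1 + p ^ 2) ^ ((3:ℝ)/2)) ^ 2 * √(1 + p ^ 2) + (1/ε) * (√(1 + p ^ 2) - 1)

noncomputable def potential (z : ℝ) : ℝ :=
  4 * (√2 - √(1 + (√(1 + z ^ 2))⁻¹))

noncomputable def potentialDeriv (z : ℝ) : ℝ :=
  2 * z / (√(1 + z ^ 2) ^ 3 * √(1 + (√(1 + z ^ 2))⁻¹))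

theorem hasDerivAt_potential (z : ℝ) : HasDerivAt potential (potentialDeriv z) z := by
  have hs : 0 < √(1 + z ^ 2) := by positivity
  have hsq : HasDerivAt (fun z : ℝ => √(1 + z ^ 2)) (2 * z / (2 * √(1 + z ^ 2))) z :=
    (((hasDerivAt_pow 2 z).const_add 1).sqrt (by positivity)).congr_deriv (by ring)
  have hinv : HasDerivAt (fun z : ℝ => 1 + (√(1 + z ^ 2))⁻¹)
      (-(2 * z / (2 * √(1 + z ^ 2))) / √(1 + z ^ 2) ^ 2) z :=
    (hsq.inv hs.ne').const_add 1
  refine (((hinv.sqrt (by positivity)).const_sub √2).const_mul 4).congr_deriv ?_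
  have : √(1 + (√(1 + z ^ 2))⁻¹) ≠ 0 := by positivity
  simp only [potentialDeriv]
  field_simp
  ring

theorem potentialDeriv_mul_le_density {ε : ℝ} (hε : 0 < ε) (p q : ℝ) :
    potentialDeriv p * q ≤ density ε p q := by
  have hpow : (1 + p ^ 2) ^ ((3:ℝ)/2) = √(1 + p ^ 2) ^ 3 := by
    rw [rpow_div_two_eq_sqrt _ (by positivity)]; norm_cast
  rw [density, potentialDeriv, hpow]
  set s := √(1 + p ^ 2)
  set t := √(1 + s⁻¹)
  have hs : 0 < s := by positivity
  have ht : 0 < t := by positivity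
  have hs_sq : s ^ 2 = 1 + p ^ 2 := sq_sqrt (by positivity)
  have ht_sq : t ^ 2 * s = s + 1 := by rw [sq_sqrt (by positivity)]; field_simp
  clear_value s t
  -- AM–GM: the gap is a perfect square
  have hgap : ε * (q / s ^ 3) ^ 2 * s + 1 / ε * (s - 1) - 2 * p / (s ^ 3 * t) * q
      = (ε * q * t - p * s ^ 2) ^ 2 / (ε * s ^ 5 * t ^ 2) := by
    field_simp
    linear_combination (s ^ 5 - s ^ 4) * ht_sq + s ^ 4 * hs_sq
  have : 0 ≤ (ε * q * t - p * s ^ 2) ^ 2 / (ε * s ^ 5 * t ^ 2) := by positivity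
  linarith

theorem potential_sub_le_integral_density {ε a b : ℝ} (hε : 0 < ε) (hab : a ≤ b) {w : ℝ → ℝ}
    (hw : Differentiable ℝ w)
    (hint : IntervalIntegrable (fun x => density ε (w x) (deriv w x)) volume a b) :
    potential (w b) - potential (w a) ≤ ∫ x in a..b, density ε (w x) (deriv w x) := by
  have hderiv (x : ℝ) : HasDerivAt (potential ∘ w) (potentialDeriv (w x) * deriv w x) x :=
    (hasDerivAt_potential (w x)).comp x (hw x).hasDerivAt
  exact sub_le_integral_of_hasDeriv_right_of_le hab
    (fun x _ => (hderiv x).continuousAt.continuousWithinAt)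
    (fun x _ => (hderiv x).hasDerivWithinAt)
    ((intervalIntegrable_iff_integrableOn_Icc_of_le hab).mp hint)
    (fun x _ => potentialDeriv_mul_le_density hε _ _)

theorem potential_zero : potential 0 = 0 := by
  norm_num [potential]

theorem potential_of_abs_eq_tan {z θ : ℝ} (hθ : 0 < cos θ) (hz : |z| = tan θ) :
    potential z = 4 * (√2 - √(1 + cos θ)) := by
  rw [potential, ← sq_abs, hz, inv_sqrt_one_add_tan_sq hθ]

end ModicaMortola

theorem modica_mortola_lower_bound
    (ε L θ : ℝ) (hε : 0 < ε) (hL : 0 < L) (hθ : θ ∈ Ico (0:ℝ) (π / 2))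
    (v : ℝ → ℝ)
    (hv₂ : ∀ x, DifferentiableAt ℝ (deriv v) x)
    (hint : IntervalIntegrable (fun x =>
      ε * (deriv (deriv v) x / (1 + (deriv v x) ^ 2) ^ ((3:ℝ)/2)) ^ 2
          * Real.sqrt (1 + (deriv v x) ^ 2)
        + (1/ε) * (Real.sqrt (1 + (deriv v x) ^ 2) - 1)) volume 0 L)
    (hv0 : deriv v 0 = 0) (hvL : |deriv v L| = Real.tan θ) :
    (∫ x in (0:ℝ)..L,
        ε * (deriv (deriv v) x / (1 + (deriv v x) ^ 2) ^ ((3:ℝ)/2)) ^ 2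
            * Real.sqrt (1 + (deriv v x) ^ 2)
          + (1/ε) * (Real.sqrt (1 + (deriv v x) ^ 2) - 1))
      ≥ 4 * (Real.sqrt 2 - Real.sqrt (1 + Real.cos θ)) := by
  have hcos : 0 < cos θ := cos_pos_of_mem_Ioo ⟨by linarith [hθ.1, pi_pos], hθ.2⟩
  have h := ModicaMortola.potential_sub_le_integral_density hε hL.le hv₂ hint
  rwa [hv0, ModicaMortola.potential_zero, sub_zero,
    ModicaMortola.potential_of_abs_eq_tan hcos hvL] at h
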